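/- arXiv:2407.13732 — 3 statements merged into one kernel-verified Lean document; each statement's English description precedes it below -/
import Mathlib

section
/- Pointwise domination of the deferral loss by the RL2D surrogate: let Ψ : [0,1] → [0,+∞] be non-increasing with Ψ(2/3) > 0. For every score vector h ∈ ℝ^{Ȳ}, every y ∈ [n], every cost value γ ∈ [0,1], and every maximizer k ∈ Ȳ of h (k ∈ argmax_{k'∈Ȳ} h_{k'}), one has 1_{k≠y}·1_{k∈[n]} + γ·1_{k=n+1} ≤ ( γ·Ψ(s_y(h)) + (1−γ)·Ψ(s_y(h) + s_{n+1}(h)) ) / Ψ(2/3). -/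
/-
If `k` maximizes `h`, any `c` labels other than `k` carry softmax mass at most `c/(c+1)`:
each weighs at most `exp (h k)`, which is itself part of the normalizer. So once `k ≠ y` we get
`s_y ≤ 1/2 ≤ 2/3`, and if `k` is not the deferral label either, `s_y + s_{n+1} ≤ 2/3`; as `Ψ`
is non-increasing, each `Ψ`-term the loss needs is then at least `Ψ(2/3)`.
-/

open scoped ENNReal

/-- Softmax of a score vector. -/
noncomputable def smax {m : ℕ} (v : Fin m → ℝ) (y : Fin m) : ℝ :=
  Real.exp (v y) / ∑ y' : Fin m, Real.exp (v y')

lemma smax_nonneg {m : ℕ} (v : Fin m → ℝ) (a : Fin m) : 0 ≤ smax v a :=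
  div_nonneg (Real.exp_pos _).le (Finset.sum_nonneg fun _ _ => (Real.exp_pos _).le)

lemma sum_smax_le_card_div_succ {m : ℕ} (v : Fin m → ℝ) {s : Finset (Fin m)} {k : Fin m}
    (hks : k ∉ s) (hk : ∀ j ∈ s, v j ≤ v k) :
    ∑ j ∈ s, smax v j ≤ s.card / (s.card + 1) := by
  set Z := ∑ j, Real.exp (v j)
  have hZ : 0 < Z := Finset.sum_pos (fun _ _ => Real.exp_pos _) ⟨k, Finset.mem_univ k⟩
  have hs : ∑ j ∈ s, Real.exp (v j) ≤ s.card * Real.exp (v k) := by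
    simpa using s.sum_le_card_nsmul _ _ fun j hj => Real.exp_le_exp.2 (hk j hj)
  have hsk : Real.exp (v k) + ∑ j ∈ s, Real.exp (v j) ≤ Z := by
    rw [← Finset.sum_insert (f := fun j => Real.exp (v j)) hks]
    exact Finset.sum_le_univ_sum_of_nonneg fun _ => (Real.exp_pos _).le
  simp only [smax]
  rw [← Finset.sum_div, div_le_div_iff₀ hZ (by positivity)]
  nlinarith

lemma smax_le_half {m : ℕ} (v : Fin m → ℝ) {a k : Fin m} (hak : a ≠ k) (hk : v a ≤ v k) :
    smax v a ≤ 1 / 2 := by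
  have := sum_smax_le_card_div_succ v (s := {a}) (by simpa using hak.symm) (by simpa using hk)
  norm_num at this ⊢
  linarith

lemma smax_add_smax_le_two_thirds {m : ℕ} (v : Fin m → ℝ) {a b k : Fin m} (hab : a ≠ b)
    (hak : a ≠ k) (hbk : b ≠ k) (ha : v a ≤ v k) (hb : v b ≤ v k) :
    smax v a + smax v b ≤ 2 / 3 := by
  have := sum_smax_le_card_div_succ v (s := {a, b}) (k := k) (by simp [hak.symm, hbk.symm])
    (by simp [ha, hb])
  rw [Finset.sum_pair hab, Finset.card_pair hab] at this
  norm_num at this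
  linarith

lemma ENNReal.ofReal_add_ofReal_one_sub {γ : ℝ} (h₀ : 0 ≤ γ) (h₁ : γ ≤ 1) :
    ENNReal.ofReal γ + ENNReal.ofReal (1 - γ) = 1 := by
  rw [← ENNReal.ofReal_add h₀ (by linarith)]
  simp

-- Multiplied through by `Ψ (2 / 3)`: `Ψ` may take the value `∞`, and `∞ / ∞ = 0` in `ℝ≥0∞`.
theorem pointwise_domination_general {n : ℕ} (Ψ : ℝ → ℝ≥0∞)
    (hΨmono : AntitoneOn Ψ (Set.Icc (0 : ℝ) 1))
    (v : Fin (n + 1) → ℝ) (y : Fin n) (γ : ℝ) (hγ : γ ∈ Set.Icc (0 : ℝ) 1)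
    (k : Fin (n + 1)) (hk : ∀ j, v j ≤ v k) :
    Ψ (2 / 3) *
        ENNReal.ofReal
          ((if k ≠ y.castSucc ∧ k ≠ Fin.last n then 1 else 0)
            + γ * (if k = Fin.last n then 1 else 0)) ≤
      ENNReal.ofReal γ * Ψ (smax v y.castSucc)
        + ENNReal.ofReal (1 - γ) * Ψ (smax v y.castSucc + smax v (Fin.last n)) := by
  have hΨ : ∀ x, 0 ≤ x → x ≤ 2 / 3 → Ψ (2 / 3) ≤ Ψ x := fun x h₀ h =>
    hΨmono ⟨h₀, by linarith⟩ ⟨by norm_num, by norm_num⟩ h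
  have hy : y.castSucc ≠ Fin.last n := (Fin.castSucc_lt_last y).ne
  have hsy := smax_nonneg v y.castSucc
  by_cases hky : k = y.castSucc
  · simp [hky, hy]
  by_cases hkl : k = Fin.last n
  · subst hkl
    calc Ψ (2 / 3) * _ = ENNReal.ofReal γ * Ψ (2 / 3) := by simp [mul_comm]
      _ ≤ ENNReal.ofReal γ * Ψ (smax v y.castSucc) := by
        gcongr
        exact hΨ _ hsy <| (smax_le_half v (Ne.symm hky) (hk _)).trans (by norm_num)
      _ ≤ _ := le_self_add
  · have hpair := smax_add_smax_le_two_thirds v hy (Ne.symm hky) (Ne.symm hkl) (hk _) (hk _)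
    have hsl := smax_nonneg v (Fin.last n)
    calc Ψ (2 / 3) * _
        = ENNReal.ofReal γ * Ψ (2 / 3) + ENNReal.ofReal (1 - γ) * Ψ (2 / 3) := by
          simp [hky, hkl, ← add_mul, ENNReal.ofReal_add_ofReal_one_sub hγ.1 hγ.2]
      _ ≤ _ := by
        gcongr
        · exact hΨ _ hsy (by linarith)
        · exact hΨ _ (by linarith) hpair

/-- pointwise domination of the deferral loss by the RL2D surrogate.
Let `Ψ : [0,1] → [0,+∞]` be non-increasing with `Ψ(2/3) > 0`.  For every score
vector `h ∈ ℝ^{Ȳ}`, every `y ∈ [n]`, every cost value `γ ∈ [0,1]`, and every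
maximizer `k` of `h`,
`1_{k≠y}·1_{k∈[n]} + γ·1_{k=n+1} ≤ ( γ·Ψ(s_y(h)) + (1−γ)·Ψ(s_y(h)+s_{n+1}(h)) ) / Ψ(2/3)`.
Since `Ψ` may take the value `+∞`, the inequality is stated in the equivalent
multiplied form `Ψ(2/3) · LHS ≤ γ·Ψ(s_y(h)) + (1−γ)·Ψ(s_y(h)+s_{n+1}(h))`, which
avoids the `∞/∞` junk value of `ℝ≥0∞` division. -/
theorem pointwise_domination {n : ℕ} (hn : 2 ≤ n) (Ψ : ℝ → ℝ≥0∞)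
    (hΨmono : AntitoneOn Ψ (Set.Icc (0 : ℝ) 1)) (hΨ23 : 0 < Ψ (2 / 3))
    (v : Fin (n + 1) → ℝ) (y : Fin n) (γ : ℝ) (hγ : γ ∈ Set.Icc (0 : ℝ) 1)
    (k : Fin (n + 1)) (hk : ∀ j, v j ≤ v k) :
    Ψ (2 / 3) *
        ENNReal.ofReal
          ((if k ≠ y.castSucc ∧ k ≠ Fin.last n then 1 else 0)
            + γ * (if k = Fin.last n then 1 else 0)) ≤
      ENNReal.ofReal γ * Ψ (smax v y.castSucc)
        + ENNReal.ofReal (1 - γ) * Ψ (smax v y.castSucc + smax v (Fin.last n)) :=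
  pointwise_domination_general Ψ hΨmono v y γ hγ k hk
end

section
/- H-consistency bound for Ψ(t) = 1 − t with arbitrary cost (Theorem 4.3): suppose Ψ(t) = 1 − t, H is symmetric and complete, and c : X×[n] → [0,1] is any measurable cost function. Then for every h ∈ H, E_{L_def}(h) − E*_{L_def}(H) + M_{L_def}(H) ≤ (n+1)·( E_{L_Ψ}(h) − E*_{L_Ψ}(H) + M_{L_Ψ}(H) ). -/
open MeasureTheory

/-- Deferral loss `L_def(h,x,y) = 1_{𝗁(x)≠y}·1_{𝗁(x)∈[n]} + c(x,y)·1_{𝗁(x)=n+1}`,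
where the prediction `𝗁(x) = pred (h x)` and `Fin.last n` is the deferral label. -/
noncomputable def defLoss {X : Type*} {n : ℕ} (pred : (Fin (n + 1) → ℝ) → Fin (n + 1))
    (c : X → Fin n → ℝ) (h : X → Fin (n + 1) → ℝ) (x : X) (y : Fin n) : ℝ :=
  (if pred (h x) ≠ y.castSucc ∧ pred (h x) ≠ Fin.last n then 1 else 0)
    + c x y * (if pred (h x) = Fin.last n then 1 else 0)

/-- RL2D surrogate loss
`L_Ψ(h,x,y) = c(x,y)·Ψ(s_y(x;h)) + (1 − c(x,y))·Ψ(s_y(x;h) + s_{n+1}(x;h))`. -/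
noncomputable def surLoss {X : Type*} {n : ℕ} (Ψ : ℝ → ℝ) (c : X → Fin n → ℝ)
    (h : X → Fin (n + 1) → ℝ) (x : X) (y : Fin n) : ℝ :=
  c x y * Ψ (smax (h x) y.castSucc)
    + (1 - c x y) * Ψ (smax (h x) y.castSucc + smax (h x) (Fin.last n))

/-- Conditional error `C_L(h,x) = Σ_{y∈[n]} p(x,y)·L(h,x,y)`. -/
noncomputable def condErr {X : Type*} {n : ℕ} (p : X → Fin n → ℝ)
    (L : (X → Fin (n + 1) → ℝ) → X → Fin n → ℝ) (h : X → Fin (n + 1) → ℝ) (x : X) : ℝ :=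
  ∑ y : Fin n, p x y * L h x y

/-- Generalization error `E_L(h) = ∫ Σ_{y∈[n]} p(x,y)·L(h,x,y) dμ(x)`. -/
noncomputable def genErr {X : Type*} [MeasurableSpace X] {n : ℕ} (μ : Measure X)
    (p : X → Fin n → ℝ) (L : (X → Fin (n + 1) → ℝ) → X → Fin n → ℝ)
    (h : X → Fin (n + 1) → ℝ) : ℝ :=
  ∫ x, condErr p L h x ∂μ

/-- Best-in-class generalization error `E*_L(H) = inf_{h∈H} E_L(h)`. -/
noncomputable def bestErr {X : Type*} [MeasurableSpace X] {n : ℕ} (μ : Measure X)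
    (p : X → Fin n → ℝ) (L : (X → Fin (n + 1) → ℝ) → X → Fin n → ℝ)
    (H : Set (X → Fin (n + 1) → ℝ)) : ℝ :=
  sInf ((genErr μ p L) '' H)

/-- Minimizability gap `M_L(H) = E*_L(H) − ∫ inf_{h∈H} C_L(h,x) dμ(x)`. -/
noncomputable def minGap {X : Type*} [MeasurableSpace X] {n : ℕ} (μ : Measure X)
    (p : X → Fin n → ℝ) (L : (X → Fin (n + 1) → ℝ) → X → Fin n → ℝ)
    (H : Set (X → Fin (n + 1) → ℝ)) : ℝ :=
  bestErr μ p L H - ∫ x, sInf ((fun h => condErr p L h x) '' H) ∂μ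

/-- `H` is symmetric: there is a family `F` of functions `X → ℝ` such that for every
`x`, `{(h(x,1),…,h(x,n+1)) : h ∈ H} = {(f₁(x),…,f_{n+1}(x)) : f₁,…,f_{n+1} ∈ F}`. -/
def SymmetricHyp {X : Type*} {n : ℕ} (H : Set (X → Fin (n + 1) → ℝ)) : Prop :=
  ∃ F : Set (X → ℝ), ∀ x : X,
    (fun h : X → Fin (n + 1) → ℝ => h x) '' H =
      {v : Fin (n + 1) → ℝ |
        ∃ f : Fin (n + 1) → X → ℝ, (∀ k, f k ∈ F) ∧ v = fun k => f k x}

/-- `H` is complete: for every `x` and `y`, `{h(x,y) : h ∈ H} = ℝ`. -/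
def CompleteHyp {X : Type*} {n : ℕ} (H : Set (X → Fin (n + 1) → ℝ)) : Prop :=
  ∀ (x : X) (y : Fin (n + 1)),
    (fun h : X → Fin (n + 1) → ℝ => h x y) '' H = Set.univ

lemma smax_denom_pos {m : ℕ} (v : Fin (m+1) → ℝ) : 0 < ∑ y' : Fin (m+1), Real.exp (v y') :=
  Finset.sum_pos (fun _ _ => Real.exp_pos _) ⟨0, Finset.mem_univ 0⟩

lemma smax_pos {m : ℕ} (v : Fin (m+1) → ℝ) (k : Fin (m+1)) : 0 < smax v k :=
  div_pos (Real.exp_pos _) (smax_denom_pos v)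

lemma sum_smax {m : ℕ} (v : Fin (m+1) → ℝ) : ∑ k, smax v k = 1 := by
  unfold smax
  rw [← Finset.sum_div]
  exact div_self (smax_denom_pos v).ne'

lemma smax_le_smax {m : ℕ} (v : Fin (m+1) → ℝ) {j k : Fin (m+1)} (h : v j ≤ v k) :
    smax v j ≤ smax v k := by
  unfold smax
  gcongr

lemma exists_hyp {X : Type*} {n : ℕ} {H : Set (X → Fin (n+1) → ℝ)}
    (hsym : SymmetricHyp H) (hcomp : CompleteHyp H) (x : X) (v : Fin (n+1) → ℝ) :
    ∃ h' ∈ H, h' x = v := by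
  obtain ⟨F, hF⟩ := hsym
  have hk : ∀ k : Fin (n+1), ∃ f : X → ℝ, f ∈ F ∧ f x = v k := by
    intro k
    have h1 : v k ∈ (fun h : X → Fin (n+1) → ℝ => h x k) '' H := by
      rw [hcomp x k]; trivial
    obtain ⟨h', hh', hval⟩ := h1
    have h2 : h' x ∈ (fun h : X → Fin (n+1) → ℝ => h x) '' H := ⟨h', hh', rfl⟩
    rw [hF x] at h2
    obtain ⟨f, hfF, hfx⟩ := h2
    refine ⟨f k, hfF k, ?_⟩
    have := congrFun hfx.symm k
    simpa [this] using hval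
  choose f hfF hfx using hk
  have h3 : v ∈ (fun h : X → Fin (n+1) → ℝ => h x) '' H := by
    rw [hF x]
    exact ⟨f, hfF, by funext k; exact (hfx k).symm⟩
  obtain ⟨h', hh', hval⟩ := h3
  exact ⟨h', hh', hval⟩

lemma condErr_def_eq {X : Type*} {n : ℕ} (p c : X → Fin n → ℝ) (x : X)
    (hp1 : ∑ y, p x y = 1)
    (pred : (Fin (n+1) → ℝ) → Fin (n+1)) (h' : X → Fin (n+1) → ℝ) :
    condErr p (defLoss pred c) h' x
      = 1 - (Fin.snoc (p x) (1 - ∑ y, p x y * c x y) : Fin (n+1) → ℝ) (pred (h' x)) := by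
  rcases Fin.eq_castSucc_or_eq_last (pred (h' x)) with ⟨y₀, hr⟩ | hr
  · have h2 : (Fin.castSucc y₀ : Fin (n+1)) ≠ Fin.last n := (Fin.castSucc_lt_last y₀).ne
    unfold condErr defLoss
    simp only [hr, Fin.snoc_castSucc, h2, Fin.castSucc_inj, if_false, ne_eq,
      not_and, not_not, mul_zero, add_zero, not_false_eq_true, and_true]
    have key : ∀ y : Fin n, p x y * (if ¬ y₀ = y then (1:ℝ) else 0)
        = p x y - (if y = y₀ then p x y else 0) := by
      intro y
      by_cases hy : y = y₀
      · simp [hy]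
      · have hy' : ¬ y₀ = y := fun h => hy h.symm
        simp [hy, hy']
    rw [Finset.sum_congr rfl (fun y _ => key y), Finset.sum_sub_distrib, hp1,
      Finset.sum_ite_eq' Finset.univ y₀ (p x)]
    simp
  · unfold condErr defLoss
    simp only [hr, Fin.snoc_last, ne_eq, not_true_eq_false, and_false, if_false, if_true,
      mul_one, zero_add]
    ring_nf

lemma condErr_sur_eq {X : Type*} {n : ℕ} (p c : X → Fin n → ℝ) (x : X)
    (hp1 : ∑ y, p x y = 1) (h' : X → Fin (n+1) → ℝ) :
    condErr p (surLoss (fun t => 1 - t) c) h' x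
      = 1 - ∑ k, (Fin.snoc (p x) (1 - ∑ y, p x y * c x y) : Fin (n+1) → ℝ) k
          * smax (h' x) k := by
  unfold condErr surLoss
  rw [Fin.sum_univ_castSucc
    (f := fun k => (Fin.snoc (p x) (1 - ∑ y, p x y * c x y) : Fin (n+1) → ℝ) k
      * smax (h' x) k)]
  simp only [Fin.snoc_castSucc, Fin.snoc_last]
  have key : ∀ y : Fin n,
      p x y * (c x y * (1 - smax (h' x) y.castSucc)
        + (1 - c x y) * (1 - (smax (h' x) y.castSucc + smax (h' x) (Fin.last n))))
      = p x y - p x y * smax (h' x) y.castSucc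
        - (p x y - p x y * c x y) * smax (h' x) (Fin.last n) := by
    intro y; ring
  rw [Finset.sum_congr rfl (fun y _ => key y), Finset.sum_sub_distrib,
    Finset.sum_sub_distrib, hp1, ← Finset.sum_mul, Finset.sum_sub_distrib, hp1]
  have : ∑ y : Fin n, p x y * smax (h' x) (Fin.castSucc y)
      = ∑ y : Fin n, p x y * smax (h' x) (Fin.castSucc y) := rfl
  ring

lemma pointwise_bound {X : Type*} {n : ℕ} (hn : 0 < n)
    (p c : X → Fin n → ℝ) (x : X)
    (hp0 : ∀ y, 0 ≤ p x y) (hp1 : ∑ y, p x y = 1)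
    (hc : ∀ y, c x y ∈ Set.Icc (0:ℝ) 1)
    (pred : (Fin (n+1) → ℝ) → Fin (n+1))
    (hpred : ∀ (v : Fin (n+1) → ℝ) (j : Fin (n+1)), v j ≤ v (pred v))
    (H : Set (X → Fin (n+1) → ℝ))
    (hsurj : ∀ v : Fin (n+1) → ℝ, ∃ h' ∈ H, h' x = v)
    (h : X → Fin (n+1) → ℝ) (hh : h ∈ H) :
    condErr p (defLoss pred c) h x
        - sInf ((fun h' => condErr p (defLoss pred c) h' x) '' H)
      ≤ ((n:ℝ)+1) * (condErr p (surLoss (fun t => 1 - t) c) h x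
        - sInf ((fun h' => condErr p (surLoss (fun t => 1 - t) c) h' x) '' H)) := by
  set a : Fin (n+1) → ℝ := Fin.snoc (p x) (1 - ∑ y, p x y * c x y) with ha
  have hcb0 : 0 ≤ ∑ y, p x y * c x y :=
    Finset.sum_nonneg fun y _ => mul_nonneg (hp0 y) (hc y).1
  have hcb1 : ∑ y, p x y * c x y ≤ 1 := by
    calc ∑ y, p x y * c x y ≤ ∑ y, p x y :=
          Finset.sum_le_sum (fun y _ => by nlinarith [(hc y).2, hp0 y, (hc y).1])
      _ = 1 := hp1
  have ha0 : ∀ k, 0 ≤ a k := by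
    intro k
    rcases Fin.eq_castSucc_or_eq_last k with ⟨j, rfl⟩ | rfl
    · simpa [ha] using hp0 j
    · simp only [ha, Fin.snoc_last]; linarith
  have ha1 : ∀ k, a k ≤ 1 := by
    intro k
    rcases Fin.eq_castSucc_or_eq_last k with ⟨j, rfl⟩ | rfl
    · simp only [ha, Fin.snoc_castSucc]
      calc p x j ≤ ∑ y, p x y :=
            Finset.single_le_sum (fun y _ => hp0 y) (Finset.mem_univ j)
        _ = 1 := hp1
    · simp only [ha, Fin.snoc_last]; linarith
  obtain ⟨k₀, hk₀⟩ := Finite.exists_max a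
  set A := a k₀ with hA
  set Idef := (fun h' => condErr p (defLoss pred c) h' x) '' H with hIdef
  set Isur := (fun h' => condErr p (surLoss (fun t => 1 - t) c) h' x) '' H with hIsur
  have hne_def : Idef.Nonempty := ⟨_, ⟨h, hh, rfl⟩⟩
  have hne_sur : Isur.Nonempty := ⟨_, ⟨h, hh, rfl⟩⟩
  have hlb_def : ∀ z ∈ Idef, 1 - A ≤ z := by
    rintro z ⟨h', hh', rfl⟩
    show 1 - A ≤ condErr p (defLoss pred c) h' x
    rw [condErr_def_eq p c x hp1 pred h']
    have := hk₀ (pred (h' x))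
    rw [← ha]
    linarith
  have sumas : ∀ v : Fin (n+1) → ℝ, ∑ k, a k * smax v k ≤ A := by
    intro v
    calc ∑ k, a k * smax v k ≤ ∑ k, A * smax v k :=
          Finset.sum_le_sum (fun k _ => mul_le_mul_of_nonneg_right (hk₀ k) (smax_pos v k).le)
      _ = A := by rw [← Finset.mul_sum, sum_smax, mul_one]
  have hlb_sur : ∀ z ∈ Isur, 1 - A ≤ z := by
    rintro z ⟨h', hh', rfl⟩
    show 1 - A ≤ condErr p (surLoss (fun t => 1 - t) c) h' x
    rw [condErr_sur_eq p c x hp1 h', ← ha]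
    linarith [sumas (h' x)]
  have hinf_def : 1 - A ≤ sInf Idef := le_csInf hne_def hlb_def
  have hinf_sur : sInf Isur ≤ 1 - A := by
    rw [Real.sInf_le_iff ⟨1 - A, fun z hz => hlb_sur z hz⟩ hne_sur]
    intro ε hε
    set t := (n:ℝ)/ε with ht
    set v : Fin (n+1) → ℝ := fun k => if k = k₀ then t else 0 with hv
    obtain ⟨h', hh', hvx⟩ := hsurj v
    refine ⟨_, ⟨h', hh', rfl⟩, ?_⟩
    show condErr p (surLoss (fun t => 1 - t) c) h' x < 1 - A + ε
    rw [condErr_sur_eq p c x hp1 h', ← ha, hvx]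
    have hexp : ∑ k, Real.exp (v k) = Real.exp t + n := by
      have key : ∀ k : Fin (n+1), Real.exp (v k)
          = (if k = k₀ then Real.exp t - 1 else 0) + 1 := by
        intro k; by_cases hk : k = k₀ <;> simp [hv, hk]
      rw [Finset.sum_congr rfl (fun k _ => key k), Finset.sum_add_distrib,
        Finset.sum_ite_eq' Finset.univ k₀, Finset.sum_const, Finset.card_univ]
      simp
      try ring
    have hsk : smax v k₀ = Real.exp t / (Real.exp t + n) := by
      rw [smax, hexp]; simp [hv]
    have hexp_pos : (0:ℝ) < Real.exp t := Real.exp_pos t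
    have hden : (0:ℝ) < Real.exp t + n := by positivity
    have hexpt_big : (n:ℝ)/ε < Real.exp t := by
      have := Real.add_one_le_exp t
      have hn' : (0:ℝ) < (n:ℝ) := by exact_mod_cast hn
      rw [ht] at this ⊢
      nlinarith
    have hfrac : (n:ℝ)/(Real.exp t + n) < ε := by
      rw [div_lt_iff₀ hden]
      have hn' : (0:ℝ) < (n:ℝ) := by exact_mod_cast hn
      have h1 : (n:ℝ) < ε * Real.exp t := by
        rw [div_lt_iff₀ hε] at hexpt_big; linarith [mul_comm ε (Real.exp t)]
      nlinarith
    have hAs : A - ε < A * smax v k₀ := by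
      rw [hsk]
      have e1 : A * (Real.exp t / (Real.exp t + n)) = A - A * ((n:ℝ)/(Real.exp t + n)) := by
        field_simp
        ring
      rw [e1]
      have hA0 : 0 ≤ A := ha0 k₀
      have hA1 : A ≤ 1 := ha1 k₀
      have hfrac0 : 0 ≤ (n:ℝ)/(Real.exp t + n) := by positivity
      nlinarith
    have h1 : A * smax v k₀ ≤ ∑ k, a k * smax v k := by
      have := Finset.single_le_sum (f := fun k => a k * smax v k)
        (fun k _ => mul_nonneg (ha0 k) (smax_pos v k).le) (Finset.mem_univ k₀)
      simpa [hA] using this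
    linarith
  -- the core inequality at h
  set r := pred (h x) with hr
  have hsr : ∀ k, smax (h x) k ≤ smax (h x) r := fun k => smax_le_smax _ (hpred (h x) k)
  have hr1 : 1 ≤ ((n:ℝ)+1) * smax (h x) r := by
    have e : (1:ℝ) = ∑ k, smax (h x) k := (sum_smax _).symm
    calc (1:ℝ) = ∑ k, smax (h x) k := e
      _ ≤ ∑ _k : Fin (n+1), smax (h x) r := Finset.sum_le_sum (fun k _ => hsr k)
      _ = ((n:ℝ)+1) * smax (h x) r := by
          rw [Finset.sum_const, Finset.card_univ, Fintype.card_fin, nsmul_eq_mul]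
          push_cast
          ring
  have e1 : condErr p (defLoss pred c) h x = 1 - a r := by
    rw [condErr_def_eq p c x hp1 pred h, ← ha, ← hr]
  have e2 : condErr p (surLoss (fun t => 1 - t) c) h x
      = 1 - ∑ k, a k * smax (h x) k := by
    rw [condErr_sur_eq p c x hp1 h, ← ha]
  have e3 : (1 - ∑ k, a k * smax (h x) k) - (1 - A)
      = ∑ k, (A - a k) * smax (h x) k := by
    simp only [sub_mul]
    rw [Finset.sum_sub_distrib, ← Finset.mul_sum, sum_smax]
    ring
  have e4 : (A - a r) * smax (h x) r ≤ ∑ k, (A - a k) * smax (h x) k :=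
    Finset.single_le_sum (f := fun k => (A - a k) * smax (h x) k)
      (fun k _ => mul_nonneg (sub_nonneg.2 (hk₀ k)) (smax_pos _ k).le) (Finset.mem_univ r)
  have e5 : A - a r ≤ ((n:ℝ)+1) * ((A - a r) * smax (h x) r) := by
    calc A - a r = (A - a r) * 1 := (mul_one _).symm
      _ ≤ (A - a r) * (((n:ℝ)+1) * smax (h x) r) :=
          mul_le_mul_of_nonneg_left hr1 (sub_nonneg.2 (hk₀ r))
      _ = ((n:ℝ)+1) * ((A - a r) * smax (h x) r) := by ring
  have e6 : ((n:ℝ)+1) * ((A - a r) * smax (h x) r)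
      ≤ ((n:ℝ)+1) * ∑ k, (A - a k) * smax (h x) k :=
    mul_le_mul_of_nonneg_left e4 (by positivity)
  have e7 : ((n:ℝ)+1) * sInf Isur ≤ ((n:ℝ)+1) * (1 - A) :=
    mul_le_mul_of_nonneg_left hinf_sur (by positivity)
  rw [e1, e2]
  have e8 : ((n:ℝ)+1) * ((1 - ∑ k, a k * smax (h x) k) - (1 - A))
      = ((n:ℝ)+1) * ∑ k, (A - a k) * smax (h x) k := by rw [e3]
  nlinarith [hinf_def]

/-- H-consistency bound for Ψ(t) = 1 − t with an arbitrary measurable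
cost `c : X×[n] → [0,1]` (Theorem 4.3).  With `H` symmetric and complete, for every
`h ∈ H`:
`E_def(h) − E*_def(H) + M_def(H) ≤ (n+1)·( E_Ψ(h) − E*_Ψ(H) + M_Ψ(H) )`. -/
theorem hConsistency_mae {X : Type*} [MeasurableSpace X] (μ : Measure X)
    [IsProbabilityMeasure μ] (n : ℕ) (hn : 2 ≤ n)
    (p : X → Fin n → ℝ) (hpmeas : ∀ y, Measurable fun x => p x y)
    (hp0 : ∀ x y, 0 ≤ p x y) (hp1 : ∀ x, ∑ y : Fin n, p x y = 1)
    (c : X → Fin n → ℝ) (hcmeas : ∀ y, Measurable fun x => c x y)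
    (hc : ∀ x y, c x y ∈ Set.Icc (0 : ℝ) 1)
    (pred : (Fin (n + 1) → ℝ) → Fin (n + 1))
    (hpred : ∀ (v : Fin (n + 1) → ℝ) (j : Fin (n + 1)), v j ≤ v (pred v))
    (hpredmeas : Measurable pred)
    (H : Set (X → Fin (n + 1) → ℝ)) (hHmeas : ∀ h ∈ H, Measurable h)
    (hsym : SymmetricHyp H) (hcomp : CompleteHyp H)
    (h : X → Fin (n + 1) → ℝ) (hh : h ∈ H)
    (hint₁ : Integrable (condErr p (surLoss (fun t => 1 - t) c) h) μ)
    (hint₂ : Integrable (fun x => sInf ((fun h' =>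
      condErr p (surLoss (fun t => 1 - t) c) h' x) '' H)) μ)
    (hint₃ : Integrable (condErr p (defLoss pred c) h) μ)
    (hint₄ : Integrable (fun x => sInf ((fun h' =>
      condErr p (defLoss pred c) h' x) '' H)) μ) :
    genErr μ p (defLoss pred c) h - bestErr μ p (defLoss pred c) H
        + minGap μ p (defLoss pred c) H ≤
      ((n : ℝ) + 1) *
        (genErr μ p (surLoss (fun t => 1 - t) c) h
          - bestErr μ p (surLoss (fun t => 1 - t) c) H
          + minGap μ p (surLoss (fun t => 1 - t) c) H) := by
  have hsurj : ∀ (x : X) (v : Fin (n+1) → ℝ), ∃ h' ∈ H, h' x = v :=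
    fun x v => exists_hyp hsym hcomp x v
  have hpt : ∀ x, condErr p (defLoss pred c) h x
      - sInf ((fun h' => condErr p (defLoss pred c) h' x) '' H)
      ≤ ((n:ℝ)+1) * (condErr p (surLoss (fun t => 1 - t) c) h x
      - sInf ((fun h' => condErr p (surLoss (fun t => 1 - t) c) h' x) '' H)) :=
    fun x => pointwise_bound (by omega) p c x (fun y => hp0 x y) (hp1 x) (fun y => hc x y)
      pred hpred H (hsurj x) h hh
  have key : genErr μ p (defLoss pred c) h
      - ∫ x, sInf ((fun h' => condErr p (defLoss pred c) h' x) '' H) ∂μ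
      ≤ ((n:ℝ)+1) * (genErr μ p (surLoss (fun t => 1 - t) c) h
      - ∫ x, sInf ((fun h' => condErr p (surLoss (fun t => 1 - t) c) h' x) '' H) ∂μ) := by
    rw [genErr, ← integral_sub hint₃ hint₄, genErr, ← integral_sub hint₁ hint₂,
      ← integral_const_mul]
    exact integral_mono (hint₃.sub hint₄) ((hint₁.sub hint₂).const_mul _) hpt
  unfold minGap
  have g1 : ∀ a b c : ℝ, a - b + (b - c) = a - c := fun a b c => by ring
  rw [g1, g1]
  exact key
end

section
/- From pointwise conditional-regret bounds to H-consistency bounds (Appendix Theorem B.1): let L be any surrogate loss, i.e. a function L(h,x,y) ≥ 0 measurable in x, and define conditional errors C_L(h,x) = Σ_{y∈[n]} p(x,y)·L(h,x,y), best-in-class conditional errors C*_L(H,x) = inf_{h∈H} C_L(h,x), and conditional regrets ΔC_{L,H}(h,x) = C_L(h,x) − C*_L(H,x); define the same quantities for the deferral loss L_def. Let Γ : [0,∞) → [0,∞) be concave. If ΔC_{L_def,H}(h,x) ≤ Γ( ΔC_{L,H}(h,x) ) for all h ∈ H and x ∈ X, and if for the given h ∈ H the functions x ↦ ΔC_{L,H}(h,x)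 and x ↦ ΔC_{L_def,H}(h,x) are μ-integrable (in particular E*_L(H), E*_{L_def}(H), M_L(H), M_{L_def}(H) are finite), then E_{L_def}(h) − E*_{L_def}(H) + M_{L_def}(H) ≤ Γ( E_L(h) − E*_L(H) + M_L(H) ). -/
open MeasureTheory

/-! Integrating the pointwise bound `ΔC_def(h,x) ≤ Γ(ΔC_L(h,x))` and applying Jensen's inequality
to the concave `Γ` bounds the expected deferral regret by `Γ` of the expected surrogate regret; and
for either loss the expected conditional regret `E(h) − ∫ C*(H,x) dμ` is exactly
`E(h) − E*(H) + M(H)`, by the definition of the minimizability gap. -/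

open Set

lemma ConvexOn.exists_affine_le_of_mem_interior {S : Set ℝ} {f : ℝ → ℝ} (hf : ConvexOn ℝ S f)
    {x₀ : ℝ} (hx₀ : x₀ ∈ interior S) :
    ∃ s : ℝ, ∀ x ∈ S, f x₀ + s * (x - x₀) ≤ f x := by
  refine ⟨derivWithin f (Ioi x₀) x₀, fun x hx => ?_⟩
  rcases lt_trichotomy x x₀ with hlt | rfl | hgt
  · have hslope : slope f x x₀ ≤ derivWithin f (Ioi x₀) x₀ :=
      (hf.slope_le_leftDeriv_of_mem_interior hx hx₀ hlt).trans
        (hf.leftDeriv_le_rightDeriv_of_mem_interior hx₀)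
    rw [slope_def_field, div_le_iff₀ (sub_pos.mpr hlt)] at hslope
    linarith
  · simp
  · have hslope := hf.rightDeriv_le_slope_of_mem_interior hx₀ hx hgt
    rw [slope_def_field, le_div_iff₀ (sub_pos.mpr hgt)] at hslope
    linarith

lemma ConcaveOn.exists_le_affine_of_mem_interior {S : Set ℝ} {f : ℝ → ℝ} (hf : ConcaveOn ℝ S f)
    {x₀ : ℝ} (hx₀ : x₀ ∈ interior S) :
    ∃ s : ℝ, ∀ x ∈ S, f x ≤ f x₀ + s * (x - x₀) := by
  obtain ⟨s, hs⟩ := hf.neg.exists_affine_le_of_mem_interior hx₀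
  exact ⟨-s, fun x hx => by have := hs x hx; simp only [Pi.neg_apply] at this; linarith⟩

namespace MeasureTheory

variable {α : Type*} [MeasurableSpace α] {μ : Measure α} [IsProbabilityMeasure μ]

/-- Jensen's inequality without the continuity assumption of `ConcaveOn.le_map_integral`, which a
concave function on `[0, ∞)` may fail at `0`: a supporting line at `∫ g` works when `∫ g > 0`,
and otherwise `g = 0` a.e. -/
lemma integral_le_map_integral_of_ae_le_comp {Γ : ℝ → ℝ} (hΓ : ConcaveOn ℝ (Ici 0) Γ)
    {f g : α → ℝ} (hf : Integrable f μ) (hg : Integrable g μ) (hg0 : 0 ≤ᵐ[μ] g)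
    (hfg : ∀ᵐ x ∂μ, f x ≤ Γ (g x)) :
    ∫ x, f x ∂μ ≤ Γ (∫ x, g x ∂μ) := by
  rcases (integral_nonneg_of_ae hg0).eq_or_lt with hzero | hpos
  · have hg_ae : g =ᵐ[μ] 0 := (integral_eq_zero_iff_of_nonneg_ae hg0 hg).mp hzero.symm
    calc ∫ x, f x ∂μ ≤ ∫ _, Γ 0 ∂μ := by
          refine integral_mono_ae hf (integrable_const _) ?_
          filter_upwards [hfg, hg_ae] with x hfx hgx
          rwa [hgx] at hfx
      _ = Γ (∫ x, g x ∂μ) := by simp [← hzero]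
  · set t₀ := ∫ x, g x ∂μ
    obtain ⟨s, hs⟩ := hΓ.exists_le_affine_of_mem_interior (x₀ := t₀) (by simpa using hpos)
    have h_slope : Integrable (fun x => s * (g x - t₀)) μ :=
      (hg.sub (integrable_const _)).const_mul s
    have h_affine : Integrable (fun x => Γ t₀ + s * (g x - t₀)) μ :=
      (integrable_const _).add h_slope
    calc ∫ x, f x ∂μ ≤ ∫ x, Γ t₀ + s * (g x - t₀) ∂μ := by
          refine integral_mono_ae hf h_affine ?_
          filter_upwards [hfg, hg0] with x hfx hgx
          exact hfx.trans (hs (g x) hgx)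
      _ = Γ t₀ := by
          rw [integral_add (integrable_const _) h_slope, integral_const_mul,
            integral_sub hg (integrable_const _)]
          simp [t₀]

end MeasureTheory

section Regret

variable {X : Type*} {n : ℕ}

/-- The conditional regret `ΔC_{L,H}(h,x) = C_L(h,x) − C*_L(H,x)`. -/
noncomputable def condRegret (p : X → Fin n → ℝ) (L : (X → Fin (n + 1) → ℝ) → X → Fin n → ℝ)
    (H : Set (X → Fin (n + 1) → ℝ)) (h : X → Fin (n + 1) → ℝ) (x : X) : ℝ :=
  condErr p L h x - sInf ((fun h' => condErr p L h' x) '' H)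

lemma condErr_nonneg {p : X → Fin n → ℝ} (hp0 : ∀ x y, 0 ≤ p x y)
    {L : (X → Fin (n + 1) → ℝ) → X → Fin n → ℝ} (hL0 : ∀ h x y, 0 ≤ L h x y)
    (h : X → Fin (n + 1) → ℝ) (x : X) : 0 ≤ condErr p L h x :=
  Finset.sum_nonneg fun y _ => mul_nonneg (hp0 x y) (hL0 h x y)

lemma condRegret_nonneg {p : X → Fin n → ℝ} (hp0 : ∀ x y, 0 ≤ p x y)
    {L : (X → Fin (n + 1) → ℝ) → X → Fin n → ℝ} (hL0 : ∀ h x y, 0 ≤ L h x y)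
    {H : Set (X → Fin (n + 1) → ℝ)} {h : X → Fin (n + 1) → ℝ} (hh : h ∈ H) (x : X) :
    0 ≤ condRegret p L H h x := by
  have hbdd : BddBelow ((fun h' => condErr p L h' x) '' H) :=
    ⟨0, by rintro _ ⟨h', -, rfl⟩; exact condErr_nonneg hp0 hL0 h' x⟩
  exact sub_nonneg.mpr (csInf_le hbdd ⟨h, hh, rfl⟩)

lemma integral_condRegret [MeasurableSpace X] {μ : Measure X} {p : X → Fin n → ℝ}
    {L : (X → Fin (n + 1) → ℝ) → X → Fin n → ℝ} {H : Set (X → Fin (n + 1) → ℝ)}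
    {h : X → Fin (n + 1) → ℝ} (hErr : Integrable (condErr p L h) μ)
    (hInf : Integrable (fun x => sInf ((fun h' => condErr p L h' x) '' H)) μ) :
    ∫ x, condRegret p L H h x ∂μ = genErr μ p L h - bestErr μ p L H + minGap μ p L H := by
  unfold condRegret
  rw [integral_sub hErr hInf, minGap, genErr]
  ring

end Regret

theorem regret_transfer_general {X : Type*} [MeasurableSpace X] (μ : Measure X)
    [IsProbabilityMeasure μ] (n : ℕ)
    (p : X → Fin n → ℝ)
    (hp0 : ∀ x y, 0 ≤ p x y)
    (c : X → Fin n → ℝ)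
    (pred : (Fin (n + 1) → ℝ) → Fin (n + 1))
    (H : Set (X → Fin (n + 1) → ℝ))
    (L : (X → Fin (n + 1) → ℝ) → X → Fin n → ℝ)
    (hL0 : ∀ h' x y, 0 ≤ L h' x y)
    (Γ : ℝ → ℝ) (hΓ : ConcaveOn ℝ (Set.Ici (0 : ℝ)) Γ)
    (hpt : ∀ h' ∈ H, ∀ x : X,
      condErr p (defLoss pred c) h' x
          - sInf ((fun h'' => condErr p (defLoss pred c) h'' x) '' H) ≤
        Γ (condErr p L h' x - sInf ((fun h'' => condErr p L h'' x) '' H)))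
    (h : X → Fin (n + 1) → ℝ) (hh : h ∈ H)
    (hint₁ : Integrable (condErr p L h) μ)
    (hint₂ : Integrable (fun x => sInf ((fun h'' => condErr p L h'' x) '' H)) μ)
    (hint₃ : Integrable (condErr p (defLoss pred c) h) μ)
    (hint₄ : Integrable
      (fun x => sInf ((fun h'' => condErr p (defLoss pred c) h'' x) '' H)) μ) :
    genErr μ p (defLoss pred c) h - bestErr μ p (defLoss pred c) H
        + minGap μ p (defLoss pred c) H ≤
      Γ (genErr μ p L h - bestErr μ p L H + minGap μ p L H) := by
  rw [← integral_condRegret hint₃ hint₄, ← integral_condRegret hint₁ hint₂]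
  exact integral_le_map_integral_of_ae_le_comp hΓ (hint₃.sub hint₄) (hint₁.sub hint₂)
    (Filter.Eventually.of_forall (condRegret_nonneg hp0 hL0 hh))
    (Filter.Eventually.of_forall (hpt h hh))

/-- from pointwise conditional-regret bounds to H-consistency bounds
(Appendix Theorem B.1).  Let `L` be any nonnegative surrogate loss, measurable in
`x`, and let `Γ : [0,∞) → [0,∞)` be concave.  If
`ΔC_def(h',x) ≤ Γ(ΔC_{L}(h',x))` for all `h' ∈ H` and `x`, and the conditional
errors and pointwise best-in-class conditional errors of both losses are
`μ`-integrable for the given `h ∈ H` (so that the conditional regrets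
`x ↦ ΔC(h,x)` are integrable and `E*`, `M` are finite), then
`E_def(h) − E*_def(H) + M_def(H) ≤ Γ( E_L(h) − E*_L(H) + M_L(H) )`. -/
theorem regret_transfer {X : Type*} [MeasurableSpace X] (μ : Measure X)
    [IsProbabilityMeasure μ] (n : ℕ) (hn : 2 ≤ n)
    (p : X → Fin n → ℝ) (hpmeas : ∀ y, Measurable fun x => p x y)
    (hp0 : ∀ x y, 0 ≤ p x y) (hp1 : ∀ x, ∑ y : Fin n, p x y = 1)
    (c : X → Fin n → ℝ) (hcmeas : ∀ y, Measurable fun x => c x y)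
    (hc : ∀ x y, c x y ∈ Set.Icc (0 : ℝ) 1)
    (pred : (Fin (n + 1) → ℝ) → Fin (n + 1))
    (hpred : ∀ (v : Fin (n + 1) → ℝ) (j : Fin (n + 1)), v j ≤ v (pred v))
    (hpredmeas : Measurable pred)
    (H : Set (X → Fin (n + 1) → ℝ)) (hHmeas : ∀ h ∈ H, Measurable h)
    (L : (X → Fin (n + 1) → ℝ) → X → Fin n → ℝ)
    (hL0 : ∀ h' x y, 0 ≤ L h' x y)
    (hLmeas : ∀ h' ∈ H, ∀ y : Fin n, Measurable fun x => L h' x y)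
    (Γ : ℝ → ℝ) (hΓ : ConcaveOn ℝ (Set.Ici (0 : ℝ)) Γ)
    (hΓ0 : ∀ t, 0 ≤ t → 0 ≤ Γ t)
    (hpt : ∀ h' ∈ H, ∀ x : X,
      condErr p (defLoss pred c) h' x
          - sInf ((fun h'' => condErr p (defLoss pred c) h'' x) '' H) ≤
        Γ (condErr p L h' x - sInf ((fun h'' => condErr p L h'' x) '' H)))
    (h : X → Fin (n + 1) → ℝ) (hh : h ∈ H)
    (hint₁ : Integrable (condErr p L h) μ)
    (hint₂ : Integrable (fun x => sInf ((fun h'' => condErr p L h'' x) '' H)) μ)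
    (hint₃ : Integrable (condErr p (defLoss pred c) h) μ)
    (hint₄ : Integrable
      (fun x => sInf ((fun h'' => condErr p (defLoss pred c) h'' x) '' H)) μ) :
    genErr μ p (defLoss pred c) h - bestErr μ p (defLoss pred c) H
        + minGap μ p (defLoss pred c) H ≤
      Γ (genErr μ p L h - bestErr μ p L H + minGap μ p L H) :=
  regret_transfer_general μ n p hp0 c pred H L hL0 Γ hΓ hpt h hh hint₁ hint₂ hint₃ hint₄
end
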